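/- arXiv:hep-th/0011161 — 2 statements merged into one kernel-verified Lean document; each statement's English description precedes it below -/
import Mathlib

section
/- Define Q^l_m(a) = sum_{k=1}^{m} binom(l+1, k) P^{(k)}_m(a), with binom(l+1,k)=0 for k > l+1. Then for n ≥ 1 and m ≥ 2: Q^n_m = Q^{n-1}_m + a_m + sum_{l=1}^{m-1} a_l · Q^{n-1}_{m-l}, and for m = 1: Q^n_1 = Q^{n-1}_1 + a_1. -/
/-!
Peeling off the first part of a composition gives `P^{(k+1)}_m = Σ_{j=1}^m a_j P^{(k)}_{m-j}`,
so `R^l_m = Σ_k C(l,k) P^{(k)}_m` is the coefficient of `t^m` in `(1 + a₁ t + a₂ t² + ⋯)^l`,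
and Pascal's rule gives `R^{l+1}_m = R^l_m + Σ_{j=1}^m a_j R^l_{m-j}`. The recursion follows
because `Q^l_m = R^{l+1}_m` for `m ≥ 1` and `R^l_0 = 1`.
-/

/-- The noncommutative symmetric polynomial
`P_m^{(k)}(a) = Σ_{j_1+···+j_k = m, j_i ≥ 1} a_{j_1}···a_{j_k}`. -/
noncomputable def Pp {A : Type*} [Ring A] (a : ℕ → A) (k m : ℕ) : A :=
  ∑ j : Fin k → Fin (m + 1),
    if (∀ i, 1 ≤ (j i : ℕ)) ∧ (∑ i, (j i : ℕ)) = m then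
      (List.ofFn fun i => a ((j i : ℕ))).prod
    else 0

/-- `Q^l_m(a) = Σ_{k=1}^m C(l+1,k) P^{(k)}_m(a)` (the convention `C(l+1,k) = 0`
for `k > l+1` is built into `Nat.choose`). -/
noncomputable def Qp {A : Type*} [Ring A] (a : ℕ → A) (l m : ℕ) : A :=
  ∑ k ∈ Finset.Icc 1 m, ((l + 1).choose k) • Pp a k m

open Finset

section

variable {A : Type*} [Ring A] (a : ℕ → A)

/-- Peeling off the first part changes `m`, so the bound `N` on the parts is kept separate. -/
noncomputable def PpBounded (N k m : ℕ) : A :=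
  ∑ j : Fin k → Fin (N + 1),
    if (∀ i, 1 ≤ (j i : ℕ)) ∧ (∑ i, (j i : ℕ)) = m then
      (List.ofFn fun i => a ((j i : ℕ))).prod
    else 0

theorem PpBounded_eq_Pp {N k m : ℕ} (h : m ≤ N) : PpBounded a N k m = Pp a k m := by
  have hle : m + 1 ≤ N + 1 := by omega
  symm
  refine Fintype.sum_of_injective (fun j i => Fin.castLE hle (j i))
    (fun j₁ j₂ hj => funext fun i => Fin.castLE_injective hle (congrFun hj i)) _ _ ?_ ?_
  · rintro j hj
    rw [if_neg]
    rintro ⟨-, hsum⟩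
    refine hj ⟨fun i => ⟨j i, ?_⟩, funext fun i => Fin.ext rfl⟩
    have hji : (j i : ℕ) ≤ ∑ i, (j i : ℕ) :=
      single_le_sum (f := fun i => (j i : ℕ)) (fun _ _ => Nat.zero_le _) (mem_univ i)
    omega
  · intro j
    rfl

theorem PpBounded_succ_left (N k m : ℕ) :
    PpBounded a N (k + 1) m =
      ∑ x : Fin (N + 1),
        if 1 ≤ (x : ℕ) ∧ (x : ℕ) ≤ m then a x * PpBounded a N k (m - x) else 0 := by
  unfold PpBounded
  rw [← (Fin.consEquiv fun _ => Fin (N + 1)).sum_comp, Fintype.sum_prod_type]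
  refine Fintype.sum_congr _ _ fun x => ?_
  split_ifs with hx
  · rw [mul_sum]
    refine Fintype.sum_congr _ _ fun j => ?_
    simp only [Fin.consEquiv_apply, Fin.forall_fin_succ, Fin.cons_zero, Fin.cons_succ,
      Fin.sum_univ_succ, List.ofFn_succ, List.prod_cons, mul_ite, mul_zero]
    congr 1
    rw [and_iff_right hx.1]
    exact propext (and_congr_right fun _ => by omega)
  · refine Fintype.sum_eq_zero _ fun j => if_neg ?_
    simp only [Fin.consEquiv_apply, Fin.forall_fin_succ, Fin.cons_zero, Fin.sum_univ_succ]
    omega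

theorem Pp_zero_left (m : ℕ) : Pp a 0 m = if m = 0 then 1 else 0 := by
  simp [Pp, eq_comm]

theorem Pp_succ_left (k m : ℕ) :
    Pp a (k + 1) m = ∑ j ∈ Icc 1 m, a j * Pp a k (m - j) := by
  rw [← PpBounded_eq_Pp a le_rfl, PpBounded_succ_left,
    Fin.sum_univ_eq_sum_range
      (fun x => if 1 ≤ x ∧ x ≤ m then a x * PpBounded a m k (m - x) else 0),
    ← sum_filter]
  refine sum_congr (by ext x; simp only [mem_filter, mem_range, mem_Icc]; omega) fun j _ => ?_
  rw [PpBounded_eq_Pp a (Nat.sub_le m j)]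

theorem Pp_eq_zero_of_lt {k m : ℕ} (h : m < k) : Pp a k m = 0 := by
  induction k generalizing m with
  | zero => omega
  | succ k ih =>
    rw [Pp_succ_left]
    exact sum_eq_zero fun j hj => by rw [ih (by simp at hj; omega), mul_zero]

/-- The coefficient of `t ^ m` in `(1 + a₁ t + a₂ t² + ⋯) ^ l`. -/
noncomputable def onePlusPowCoeff (l m : ℕ) : A :=
  ∑ k ∈ range (m + 1), l.choose k • Pp a k m

theorem onePlusPowCoeff_zero_right (l : ℕ) : onePlusPowCoeff a l 0 = 1 := by
  simp [onePlusPowCoeff, Pp_zero_left]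

theorem onePlusPowCoeff_eq_sum_range {l m N : ℕ} (h : m < N) :
    onePlusPowCoeff a l m = ∑ k ∈ range N, l.choose k • Pp a k m := by
  refine sum_subset (range_subset_range.2 h) fun k hk hkm => ?_
  rw [Pp_eq_zero_of_lt a (by simp at hk hkm; omega), smul_zero]

theorem onePlusPowCoeff_succ (l m : ℕ) :
    onePlusPowCoeff a (l + 1) m =
      onePlusPowCoeff a l m + ∑ j ∈ Icc 1 m, a j * onePlusPowCoeff a l (m - j) := by
  have hshift : ∑ k ∈ range m, l.choose k • Pp a (k + 1) m =
      ∑ j ∈ Icc 1 m, a j * onePlusPowCoeff a l (m - j) := by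
    simp_rw [Pp_succ_left, smul_sum, ← mul_smul_comm]
    rw [sum_comm]
    refine sum_congr rfl fun j hj => ?_
    rw [onePlusPowCoeff_eq_sum_range a (N := m) (by simp at hj; omega), mul_sum]
  rw [onePlusPowCoeff, onePlusPowCoeff, sum_range_succ', sum_range_succ', ← hshift]
  simp only [Nat.choose_succ_succ', add_smul, sum_add_distrib, Nat.choose_zero_right]
  abel

theorem Qp_eq_onePlusPowCoeff (l : ℕ) {m : ℕ} (hm : 1 ≤ m) :
    Qp a l m = onePlusPowCoeff a (l + 1) m := by
  rw [onePlusPowCoeff, ← Nat.Ico_zero_eq_range, Ico_add_one_right_eq_Icc,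
    ← insert_Icc_add_one_left_eq_Icc (Nat.zero_le m),
    sum_insert (by simp), Pp_zero_left, if_neg (by omega), smul_zero, zero_add]
  rfl

theorem Qp_succ (l : ℕ) {m : ℕ} (hm : 1 ≤ m) :
    Qp a (l + 1) m = Qp a l m + a m + ∑ j ∈ Icc 1 (m - 1), a j * Qp a l (m - j) := by
  obtain ⟨m, rfl⟩ : ∃ m', m = m' + 1 := ⟨m - 1, by omega⟩
  have hQ : ∀ j ∈ Icc 1 m,
      a j * Qp a l (m + 1 - j) = a j * onePlusPowCoeff a (l + 1) (m + 1 - j) :=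
    fun j hj => by rw [Qp_eq_onePlusPowCoeff a l (by simp at hj; omega)]
  rw [Qp_eq_onePlusPowCoeff a _ hm, onePlusPowCoeff_succ, ← Qp_eq_onePlusPowCoeff a l hm,
    sum_Icc_succ_top (by omega), Nat.add_sub_cancel, sum_congr rfl hQ, Nat.sub_self,
    onePlusPowCoeff_zero_right, mul_one]
  abel

end

theorem Qp_recursion_general {A : Type*} [Ring A] (a : ℕ → A)
    (n : ℕ) (hn : 1 ≤ n) :
    (∀ m, 2 ≤ m →
      Qp a n m = Qp a (n - 1) m + a m +
        ∑ l ∈ Finset.Icc 1 (m - 1), a l * Qp a (n - 1) (m - l)) ∧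
    Qp a n 1 = Qp a (n - 1) 1 + a 1 := by
  obtain ⟨l, rfl⟩ : ∃ l, n = l + 1 := ⟨n - 1, by omega⟩
  rw [Nat.add_sub_cancel]
  exact ⟨fun m hm => Qp_succ a l (by omega), by simpa using Qp_succ a l le_rfl⟩

/-- For `n ≥ 1` and `m ≥ 2`:
`Q^n_m = Q^{n-1}_m + a_m + Σ_{l=1}^{m-1} a_l · Q^{n-1}_{m-l}`,
and for `m = 1`: `Q^n_1 = Q^{n-1}_1 + a_1`. -/
theorem Qp_recursion {A : Type*} [Ring A] [Algebra ℂ A] (a : ℕ → A)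
    (n : ℕ) (hn : 1 ≤ n) :
    (∀ m, 2 ≤ m →
      Qp a n m = Qp a (n - 1) m + a m +
        ∑ l ∈ Finset.Icc 1 (m - 1), a l * Qp a (n - 1) (m - l)) ∧
    Qp a n 1 = Qp a (n - 1) 1 + a 1 :=
  Qp_recursion_general a n hn
end

section
/- The algebra H^dif = ℂ⟨a_1, a_2, ...⟩ of noncommutative polynomials, equipped with the coproduct Δ(a_n) = 1 ⊗ a_n + a_n ⊗ 1 + Σ_{m=1}^{n-1} Q^{n-m}_m(a) ⊗ a_{n-m} (extended as an algebra morphism), is a coassociative bialgebra: (Δ ⊗ id)∘Δ = (id ⊗ Δ)∘Δ. -/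
/-!
Put `a₀ := 1` and `F := Σ aₙ Xⁿ = 1 + Σ_{n ≥ 1} aₙ Xⁿ`. Expanding `(1 + (F - 1)) ^ (l + 1)` by the
binomial theorem shows that `Q^l_m(a)` is the coefficient of `X^m` in `F ^ (l + 1)`, so the defining
formula reads `Δ(aₙ) = Σ_{i + p = n} [Xⁱ] F ^ (p + 1) ⊗ aₚ`: applied coefficientwise, `Δ F` is
`(F ⊗ 1) · F(X F)`, the substitution `X ↦ X F` acting on the coefficients in the right factor.
This twisted substitution is multiplicative, hence `Δ(F ^ k) = (F ^ k ⊗ 1) · F ^ k (X F)`, i.e.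
`Δ([Xᵐ] F ^ k) = Σ_{i + s = m} [Xⁱ] F ^ (s + k) ⊗ [Xˢ] F ^ k`. With it, both `(Δ ⊗ id) Δ(aₙ)` and
`(id ⊗ Δ) Δ(aₙ)` become `Σ_{i + s + p = n} [Xⁱ] F ^ (s + p + 1) ⊗ [Xˢ] F ^ (p + 1) ⊗ aₚ`, and two
algebra maps that agree on the generators agree everywhere.
-/

open scoped TensorProduct

/-- The free associative unital `ℂ`-algebra `ℂ⟨a_1, a_2, ...⟩`
(the generator of index `0` is unused; `a_n = ι n` for `n ≥ 1`). -/
abbrev Hdif : Type := FreeAlgebra ℂ ℕ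

/-- The generators `a_n`. -/
noncomputable def gen : ℕ → Hdif := FreeAlgebra.ι ℂ

/-- The coproduct `Δ : H^dif → H^dif ⊗ H^dif`, the unique algebra morphism with
`Δ(a_n) = 1 ⊗ a_n + a_n ⊗ 1 + Σ_{m=1}^{n-1} Q^{n-m}_m(a) ⊗ a_{n-m}`. -/
noncomputable def Δdif : Hdif →ₐ[ℂ] Hdif ⊗[ℂ] Hdif :=
  FreeAlgebra.lift ℂ fun n =>
    1 ⊗ₜ[ℂ] gen n + gen n ⊗ₜ[ℂ] 1 +
      ∑ m ∈ Finset.Icc 1 (n - 1), Qp gen (n - m) m ⊗ₜ[ℂ] gen (n - m)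

open Finset PowerSeries

namespace Finset.Nat
variable {M : Type*} [AddCommMonoid M]

theorem sum_antidiagonal_antidiagonal_fst_eq_snd (n : ℕ) (f : ℕ → ℕ → ℕ → M) :
    ∑ p ∈ antidiagonal n, ∑ q ∈ antidiagonal p.1, f q.1 q.2 p.2 =
      ∑ p ∈ antidiagonal n, ∑ q ∈ antidiagonal p.2, f p.1 q.1 q.2 := by
  simp only [Finset.sum_sigma']
  apply Finset.sum_nbij' (fun ⟨(_, c), (a, b)⟩ ↦ ⟨(a, b + c), (b, c)⟩)
    (fun ⟨(a, _), (b, c)⟩ ↦ ⟨(a + b, c), (a, b)⟩) <;>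
    aesop (add simp [add_assoc, add_left_comm])

theorem sum_antidiagonal_antidiagonal_antidiagonal_comm (n : ℕ) (f : ℕ → ℕ → ℕ → ℕ → M) :
    ∑ p ∈ antidiagonal n, ∑ q ∈ antidiagonal p.1, ∑ r ∈ antidiagonal p.2,
        f q.1 q.2 r.1 r.2 =
      ∑ p ∈ antidiagonal n, ∑ q ∈ antidiagonal p.1, ∑ r ∈ antidiagonal p.2,
        f q.1 r.1 q.2 r.2 := by
  simp only [Finset.sum_sigma']
  apply Finset.sum_nbij' (fun ⟨_, (a, b), (c, d)⟩ ↦ ⟨(a + c, b + d), (a, c), (b, d)⟩)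
    (fun ⟨_, (a, b), (c, d)⟩ ↦ ⟨(a + c, b + d), (a, c), (b, d)⟩) <;>
    aesop (add simp [add_assoc, add_left_comm])

end Finset.Nat

theorem PowerSeries.coeff_pow_eq_sum_fin {A : Type*} [Semiring A] (φ : A⟦X⟧) {m N : ℕ}
    (hm : m ≤ N) (k : ℕ) :
    coeff m (φ ^ k) = ∑ j : Fin k → Fin (N + 1),
      if ∑ i, (j i : ℕ) = m then (List.ofFn fun i => coeff (j i) φ).prod else 0 := by
  induction k generalizing m with
  | zero => simp [coeff_one, eq_comm]
  | succ k ih =>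
    rw [pow_succ', coeff_mul, Nat.sum_antidiagonal_eq_sum_range_succ_mk,
      ← (Fin.consEquiv fun _ => Fin (N + 1)).sum_comp, Fintype.sum_prod_type]
    simp only [Fin.consEquiv_apply, Fin.sum_univ_succ (n := k), List.ofFn_succ, Fin.cons_zero,
      Fin.cons_succ, List.prod_cons]
    have inner (e : Fin (N + 1)) :
        (∑ r : Fin k → Fin (N + 1), if (e : ℕ) + ∑ i, (r i : ℕ) = m then
          coeff e φ * (List.ofFn fun i => coeff (r i) φ).prod else 0) =
        if (e : ℕ) ≤ m then coeff e φ * coeff (m - e) (φ ^ k) else 0 := by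
      split_ifs with he
      · rw [ih (by omega), Finset.mul_sum]
        refine Finset.sum_congr rfl fun r _ => ?_
        rw [mul_ite, mul_zero]
        exact if_congr (by omega) rfl rfl
      · exact Finset.sum_eq_zero fun r _ => if_neg (by omega)
    rw [Finset.sum_congr rfl fun e _ => inner e,
      Fin.sum_univ_eq_sum_range
        (fun e => if e ≤ m then coeff e φ * coeff (m - e) (φ ^ k) else 0),
      ← Finset.sum_filter]
    congr 1
    ext e
    simp only [Finset.mem_range, Finset.mem_filter]
    omega

section Sequence
variable {A : Type*} [Ring A] (a : ℕ → A)

noncomputable def genSeries : A⟦X⟧ := X * PowerSeries.mk fun n => a (n + 1)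

theorem coeff_genSeries (n : ℕ) : coeff n (genSeries a) = if n = 0 then 0 else a n := by
  cases n <;> simp [genSeries, coeff_succ_X_mul]

theorem coeff_genSeries_pow_of_lt {k m : ℕ} (h : m < k) : coeff m (genSeries a ^ k) = 0 := by
  rw [genSeries, (commute_X _).symm.mul_pow, coeff_X_pow_mul', if_neg (by omega)]

theorem Pp_eq_coeff_genSeries_pow (k m : ℕ) : Pp a k m = coeff m (genSeries a ^ k) := by
  rw [Pp, coeff_pow_eq_sum_fin _ le_rfl]
  refine Finset.sum_congr rfl fun j _ => ?_
  by_cases hj : ∀ i, 1 ≤ (j i : ℕ)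
  · have : (fun i => coeff (j i : ℕ) (genSeries a)) = fun i => a (j i) := by
      funext i
      rw [coeff_genSeries, if_neg (by have := hj i; omega)]
    simp [hj, this]
  · obtain ⟨i, hi⟩ : ∃ i, (j i : ℕ) = 0 := by simpa [Nat.lt_one_iff] using hj
    have : (List.ofFn fun i => coeff (j i : ℕ) (genSeries a)).prod = 0 :=
      List.prod_eq_zero (List.mem_ofFn.mpr ⟨i, by rw [hi, coeff_genSeries, if_pos rfl]⟩)
    simp [hj, this]

theorem Qp_eq_coeff_one_add_genSeries_pow (l : ℕ) {m : ℕ} (hm : 1 ≤ m) :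
    Qp a l m = coeff m ((1 + genSeries a) ^ (l + 1)) := by
  set T : ℕ → A := fun k => (l + 1).choose k • coeff m (genSeries a ^ k)
  have hQ : Qp a l m = ∑ k ∈ range (l + m + 2), T k := by
    rw [Qp]
    simp_rw [Pp_eq_coeff_genSeries_pow]
    refine Finset.sum_subset (fun k hk => ?_) (fun k _ hk => ?_)
    · simp only [Finset.mem_Icc, Finset.mem_range] at hk ⊢; omega
    · rcases Nat.eq_zero_or_pos k with rfl | hk0
      · simp [coeff_one, show m ≠ 0 by omega]
      · simp [coeff_genSeries_pow_of_lt a (show m < k by rw [Finset.mem_Icc] at hk; omega)]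
  have hC : coeff m ((1 + genSeries a) ^ (l + 1)) = ∑ k ∈ range (l + m + 2), T k := by
    rw [add_comm, (Commute.one_right _).add_pow', Nat.sum_antidiagonal_eq_sum_range_succ_mk]
    simp only [one_pow, mul_one, map_sum, map_nsmul]
    refine Finset.sum_subset (fun k hk => ?_) (fun k _ hk => ?_)
    · simp only [Finset.mem_range] at hk ⊢; omega
    · simp [Nat.choose_eq_zero_of_lt (show l + 1 < k by rw [Finset.mem_range] at hk; omega)]
  rw [hQ, hC]

theorem coeff_one_add_genSeries (n : ℕ) :
    coeff n (1 + genSeries a) = if n = 0 then 1 else a n := by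
  rw [map_add, coeff_one, coeff_genSeries]
  split_ifs <;> simp

end Sequence

section RightSubst
variable (R : Type*) {A B : Type*} [CommSemiring R] [Semiring A] [Semiring B] [Algebra R A]
  [Algebra R B]

/-- The series `(F ^ k ⊗ 1) · ψ(X · F)`, the coefficients of `ψ` being placed in the right
tensor factor. -/
noncomputable def rightSubst (F : A⟦X⟧) (k : ℕ) (ψ : B⟦X⟧) : (A ⊗[R] B)⟦X⟧ :=
  PowerSeries.mk fun m => ∑ p ∈ antidiagonal m, coeff p.1 (F ^ (p.2 + k)) ⊗ₜ[R] coeff p.2 ψ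

variable {R}

theorem coeff_rightSubst (F : A⟦X⟧) (k : ℕ) (ψ : B⟦X⟧) (m : ℕ) :
    coeff m (rightSubst R F k ψ) =
      ∑ p ∈ antidiagonal m, coeff p.1 (F ^ (p.2 + k)) ⊗ₜ[R] coeff p.2 ψ :=
  coeff_mk _ _

theorem rightSubst_zero_one (F : A⟦X⟧) : rightSubst R F 0 (1 : B⟦X⟧) = 1 := by
  ext m
  rw [coeff_rightSubst, Finset.sum_eq_single (m, 0)]
  · by_cases hm : m = 0 <;> simp [coeff_one, hm, Algebra.TensorProduct.one_def]
  · rintro ⟨i, s⟩ hmem hne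
    have hs : s ≠ 0 := by rintro rfl; simp_all
    simp [coeff_one, hs]
  · simp

theorem rightSubst_mul (F : A⟦X⟧) (j k : ℕ) (ψ χ : B⟦X⟧) :
    rightSubst R F j ψ * rightSubst R F k χ = rightSubst R F (j + k) (ψ * χ) := by
  ext m
  have hF (s s' : ℕ) : F ^ (s + s' + (j + k)) = F ^ (s + j) * F ^ (s' + k) := by
    rw [← pow_add]
    congr 1
    omega
  simp only [coeff_mul, coeff_rightSubst, Finset.sum_mul_sum, Algebra.TensorProduct.tmul_mul_tmul]
  refine (Finset.Nat.sum_antidiagonal_antidiagonal_antidiagonal_comm m fun a b c d =>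
    (coeff a (F ^ (b + j)) * coeff c (F ^ (d + k))) ⊗ₜ[R] (coeff b ψ * coeff d χ)).trans ?_
  refine Finset.sum_congr rfl fun p _ => ?_
  rw [Finset.sum_comm, TensorProduct.tmul_sum]
  refine Finset.sum_congr rfl fun r hr => ?_
  rw [← mem_antidiagonal.mp hr, hF, coeff_mul, TensorProduct.sum_tmul]

theorem rightSubst_pow (F : A⟦X⟧) (k : ℕ) (ψ : B⟦X⟧) (n : ℕ) :
    rightSubst R F k ψ ^ n = rightSubst R F (n * k) (ψ ^ n) := by
  induction n with
  | zero => simp [rightSubst_zero_one]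
  | succ n ih => rw [pow_succ, ih, rightSubst_mul, pow_succ, Nat.succ_mul]

end RightSubst

theorem coassoc_coeff_of_map_eq_rightSubst {R H : Type*} [CommSemiring R] [Semiring H]
    [Algebra R H] (Δ : H →ₐ[R] H ⊗[R] H) (F : H⟦X⟧)
    (hF : map (Δ : H →+* H ⊗[R] H) F = rightSubst R F 1 F) (n : ℕ) :
    Algebra.TensorProduct.assoc R R R H H H
        (Algebra.TensorProduct.map Δ (AlgHom.id R H) (Δ (coeff n F))) =
      Algebra.TensorProduct.map (AlgHom.id R H) Δ (Δ (coeff n F)) := by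
  have hpow (k m : ℕ) :
      Δ (coeff m (F ^ k)) =
        ∑ p ∈ antidiagonal m, coeff p.1 (F ^ (p.2 + k)) ⊗ₜ coeff p.2 (F ^ k) := by
    have h := congrArg (coeff m) (rightSubst_pow (R := R) F 1 F k)
    rwa [mul_one, ← hF, ← map_pow, coeff_map, coeff_rightSubst] at h
  have hΔ (m : ℕ) :
      Δ (coeff m F) = ∑ p ∈ antidiagonal m, coeff p.1 (F ^ (p.2 + 1)) ⊗ₜ coeff p.2 F := by
    simpa using hpow 1 m
  simp only [hΔ, map_sum, Algebra.TensorProduct.map_tmul, AlgHom.id_apply, hpow,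
    TensorProduct.sum_tmul, TensorProduct.tmul_sum, Algebra.TensorProduct.assoc_tmul]
  refine (Finset.Nat.sum_antidiagonal_antidiagonal_fst_eq_snd n fun a b c =>
    coeff a (F ^ (b + (c + 1))) ⊗ₜ[R] (coeff b (F ^ (c + 1)) ⊗ₜ[R] coeff c F)).trans ?_
  refine Finset.sum_congr rfl fun p _ => Finset.sum_congr rfl fun q hq => ?_
  rw [← mem_antidiagonal.mp hq, add_assoc]

theorem map_Δdif_one_add_genSeries :
    map (Δdif : Hdif →+* Hdif ⊗[ℂ] Hdif) (1 + genSeries gen) =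
      rightSubst ℂ (1 + genSeries gen) 1 (1 + genSeries gen) := by
  set F : Hdif⟦X⟧ := 1 + genSeries gen
  have hF0 (k : ℕ) : coeff 0 (F ^ k) = 1 := by
    rw [coeff_zero_eq_constantCoeff_apply, map_pow, ← coeff_zero_eq_constantCoeff_apply,
      coeff_one_add_genSeries, if_pos rfl, one_pow]
  have hF (i : ℕ) : coeff (i + 1) F = gen (i + 1) := by
    rw [coeff_one_add_genSeries, if_neg i.succ_ne_zero]
  have hF1 : coeff 0 F = 1 := by simpa using hF0 1
  ext n
  rw [coeff_map, coeff_rightSubst]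
  rcases n with _ | n
  · rw [hF1, map_one, Nat.antidiagonal_zero, sum_singleton, hF0, hF1,
      Algebra.TensorProduct.one_def]
  have hQ (i : ℕ) (hi : i < n) :
      Qp gen (n + 1 - (1 + i)) (1 + i) ⊗ₜ[ℂ] gen (n + 1 - (1 + i)) =
        coeff (i + 1) (F ^ (n - (i + 1) + 1 + 1)) ⊗ₜ[ℂ] coeff (n - (i + 1) + 1) F := by
    rw [Qp_eq_coeff_one_add_genSeries_pow _ _ (by omega), hF,
      show n + 1 - (1 + i) = n - (i + 1) + 1 by omega, add_comm 1 i]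
  rw [Nat.sum_antidiagonal_succ', Nat.sum_antidiagonal_eq_sum_range_succ_mk, sum_range_succ',
    ← Finset.sum_congr rfl fun i hi => hQ i (Finset.mem_range.mp hi)]
  dsimp only
  rw [pow_one, hF, hF, hF0, hF1, Nat.sub_zero]
  change Δdif (gen (n + 1)) = _
  rw [Δdif, gen, FreeAlgebra.lift_ι_apply, ← gen, ← Finset.Ico_add_one_right_eq_Icc,
    sum_Ico_eq_sum_range, Nat.add_sub_cancel, Nat.add_sub_cancel]
  abel

theorem Δdif_coassoc_gen (i : ℕ) :
    Algebra.TensorProduct.assoc ℂ ℂ ℂ Hdif Hdif Hdif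
        (Algebra.TensorProduct.map Δdif (AlgHom.id ℂ Hdif) (Δdif (gen i))) =
      Algebra.TensorProduct.map (AlgHom.id ℂ Hdif) Δdif (Δdif (gen i)) := by
  rcases i with _ | n
  · have h : Δdif (gen 0) = 1 ⊗ₜ gen 0 + gen 0 ⊗ₜ 1 := by
      simp [Δdif, gen]
    simp only [h, map_add, Algebra.TensorProduct.map_tmul, AlgHom.id_apply, map_one,
      Algebra.TensorProduct.one_def, TensorProduct.add_tmul, TensorProduct.tmul_add,
      Algebra.TensorProduct.assoc_tmul]
    abel
  · have h := coassoc_coeff_of_map_eq_rightSubst Δdif _ map_Δdif_one_add_genSeries (n + 1)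
    rwa [coeff_one_add_genSeries, if_neg n.succ_ne_zero] at h

/-- Coassociativity of the coproduct on `H^dif`:
`(Δ ⊗ id) ∘ Δ = (id ⊗ Δ) ∘ Δ` (up to the canonical associator). -/
theorem Δdif_coassoc (x : Hdif) :
    (TensorProduct.assoc ℂ Hdif Hdif Hdif)
        ((Algebra.TensorProduct.map Δdif (AlgHom.id ℂ Hdif)) (Δdif x)) =
      (Algebra.TensorProduct.map (AlgHom.id ℂ Hdif) Δdif) (Δdif x) := by
  have h : ((Algebra.TensorProduct.assoc ℂ ℂ ℂ Hdif Hdif Hdif).toAlgHom.comp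
      ((Algebra.TensorProduct.map Δdif (AlgHom.id ℂ Hdif)).comp Δdif)) =
        (Algebra.TensorProduct.map (AlgHom.id ℂ Hdif) Δdif).comp Δdif :=
    FreeAlgebra.hom_ext (funext Δdif_coassoc_gen)
  exact AlgHom.congr_fun h x
end
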